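/- The map φ cyclically permutes the three curves: the image φ(E_1) equals E_2, the image φ(E_2) equals E_3, and the image φ(E_3) equals E_1 (as subsets of A_n). -/
import Mathlib


open Complex

noncomputable def ρ : ℂ := Complex.exp (2 * Real.pi * Complex.I / 3)

noncomputable def a : ℂ := (1 - ρ) / 3

noncomputable def Δn (n : ℕ) : AddSubgroup ℂ := AddSubgroup.closure {(n : ℂ), 1 - ρ}

noncomputable def Δ : AddSubgroup ℂ := AddSubgroup.closure {1, ρ}

abbrev G : Type := ℂ ⧸ Δ

abbrev Gn (n : ℕ) : Type := ℂ ⧸ Δn n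

abbrev An (n : ℕ) : Type := G × Gn n

noncomputable def mkG : ℂ → G := QuotientAddGroup.mk

noncomputable def mkGn (n : ℕ) : ℂ → Gn n := QuotientAddGroup.mk

/-- The curve E₁ = {([z], [z]ₙ)}. -/
noncomputable def E1 (n : ℕ) : Set (An n) := {p | ∃ z : ℂ, p = (mkG z, mkGn n z)}

/-- The curve E₂ = {([ρz − a], [z]ₙ)}. -/
noncomputable def E2 (n : ℕ) : Set (An n) := {p | ∃ z : ℂ, p = (mkG (ρ * z - a), mkGn n z)}

/-- The curve E₃ = {([ρ²z − 2a], [z]ₙ)}. -/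
noncomputable def E3 (n : ℕ) : Set (An n) := {p | ∃ z : ℂ, p = (mkG (ρ ^ 2 * z - 2 * a), mkGn n z)}

lemma hprim : IsPrimitiveRoot ρ 3 := by
  have := Complex.isPrimitiveRoot_exp 3 (by norm_num)
  simpa [ρ] using this

lemma hρ3 : ρ ^ 3 = 1 := hprim.pow_eq_one

lemma hsum : ρ ^ 2 + ρ + 1 = 0 := by
  have h1 : ρ ≠ 1 := hprim.ne_one (by norm_num)
  have h : (ρ - 1) * (ρ ^ 2 + ρ + 1) = 0 := by linear_combination hρ3
  rcases mul_eq_zero.mp h with h | h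
  · exact absurd (sub_eq_zero.mp h) h1
  · exact h

lemma mem1 : (1:ℂ) ∈ Δ := AddSubgroup.subset_closure (Set.mem_insert _ _)
lemma memρ : ρ ∈ Δ := AddSubgroup.subset_closure (by simp)

lemma mkG_eq {x y : ℂ} (h : y - x ∈ Δ) : mkG x = mkG y := by
  unfold mkG
  rw [QuotientAddGroup.eq]
  simpa [neg_add_eq_sub] using h

/-- `φ` cyclically permutes
 the curves: `φ(E₁) = E₂`, `φ(E₂) = E₃`, `φ(E₃) = E₁`. -/
theorem stmt10 (n : ℕ) (hn : 0 < n) (φ : An n → An n)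
    (hφ : ∀ w z : ℂ, φ (mkG w, mkGn n z) = (mkG (ρ * w), mkGn n (z + a))) :
    φ '' E1 n = E2 n ∧ φ '' E2 n = E3 n ∧ φ '' E3 n = E1 n := by
  -- key Δ-membership facts
  have d1 : ∀ z : ℂ, ρ * (z + a) - a - ρ * z ∈ Δ := by
    intro z
    have : ρ * (z + a) - a - ρ * z = ρ := by
      rw [a]; linear_combination (-(1:ℂ)/3) * hsum
    rw [this]; exact memρ
  have d2 : ∀ z : ℂ, ρ ^ 2 * (z + a) - 2 * a - ρ * (ρ * z - a) ∈ Δ := by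
    intro z
    have : ρ ^ 2 * (z + a) - 2 * a - ρ * (ρ * z - a) = ρ - 1 := by
      rw [a]; linear_combination (-(1:ℂ)/3) * hρ3
    rw [this]; exact Δ.sub_mem memρ mem1
  have d3 : ∀ z : ℂ, (z + a) - ρ * (ρ ^ 2 * z - 2 * a) ∈ Δ := by
    intro z
    have : (z + a) - ρ * (ρ ^ 2 * z - 2 * a) = 1 + ρ := by
      rw [a]; linear_combination (-z) * hρ3 + (-(2:ℂ)/3) * hsum
    rw [this]; exact Δ.add_mem mem1 memρ
  refine ⟨?_, ?_, ?_⟩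
  · ext p
    constructor
    · rintro ⟨q, ⟨z, rfl⟩, rfl⟩
      refine ⟨z + a, ?_⟩
      rw [hφ]
      exact Prod.ext (mkG_eq (d1 z)) rfl
    · rintro ⟨w, rfl⟩
      refine ⟨(mkG (w - a), mkGn n (w - a)), ⟨w - a, rfl⟩, ?_⟩
      rw [hφ, sub_add_cancel]
      have := mkG_eq (d1 (w - a))
      rw [sub_add_cancel] at this
      exact Prod.ext this rfl
  · ext p
    constructor
    · rintro ⟨q, ⟨z, rfl⟩, rfl⟩
      refine ⟨z + a, ?_⟩
      rw [hφ]
      exact Prod.ext (mkG_eq (d2 z)) rfl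
    · rintro ⟨w, rfl⟩
      refine ⟨(mkG (ρ * (w - a) - a), mkGn n (w - a)), ⟨w - a, rfl⟩, ?_⟩
      rw [hφ, sub_add_cancel]
      have := mkG_eq (d2 (w - a))
      rw [sub_add_cancel] at this
      exact Prod.ext this rfl
  · ext p
    constructor
    · rintro ⟨q, ⟨z, rfl⟩, rfl⟩
      refine ⟨z + a, ?_⟩
      rw [hφ]
      exact Prod.ext (mkG_eq (d3 z)) rfl
    · rintro ⟨w, rfl⟩
      refine ⟨(mkG (ρ ^ 2 * (w - a) - 2 * a), mkGn n (w - a)), ⟨w - a, rfl⟩, ?_⟩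
      rw [hφ, sub_add_cancel]
      have := mkG_eq (d3 (w - a))
      rw [sub_add_cancel] at this
      exact Prod.ext this rfl
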